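/- Let N be a natural number, m ∈ ℝᴺ, K a symmetric positive semidefinite N×N real matrix, α ≥ 0 and β real numbers, and τ > 0. Let ψⁿ, ψⁿ⁺¹, pⁿ, pⁿ⁺¹ ∈ ℝᴺ and write ψ̄ = (ψⁿ + ψⁿ⁺¹)/2, p̄ = (pⁿ + pⁿ⁺¹)/2. Assume that for every index i: (i) mᵢ (1 − 2β p̄ᵢ)(pᵢⁿ⁺¹ − pᵢⁿ)/τ + α (K(ψⁿ⁺¹ − ψⁿ))ᵢ/τ + (Kψ̄)ᵢ = 0, and (ii) (1 − 2β p̄ᵢ)(ψᵢⁿ⁺¹ − ψᵢⁿ)/τ = (1 − 2β p̄ᵢ) p̄ᵢ − (β/6)(pᵢⁿ⁺¹ − pᵢⁿ)². Then, with E_h(ψ,p) = ½ ψᵀKψ + Σᵢ mᵢ (½ − (2β/3) pᵢ) pᵢ², one has E_h(ψⁿ⁺¹, pⁿ⁺¹) ≤ E_h(ψⁿ, pⁿ). -/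

import Mathlib

/-!
Since `K` is symmetric, the quadratic part of the energy changes by `(ψⁿ⁺¹ - ψⁿ)ᵀ K ψ̄`. The cubic
density `(½ - (2β/3) p) p²` satisfies an exact discrete chain rule whose mean-value factor is the
right-hand side of the second scheme equation; the first scheme equation then turns the change of the
cubic part into `-(ψⁿ⁺¹ - ψⁿ)ᵀ K ψ̄ - (α/τ) (ψⁿ⁺¹ - ψⁿ)ᵀ K (ψⁿ⁺¹ - ψⁿ)`. The cross terms cancel, and
the remaining viscous dissipation is nonpositive because `K` is positive semidefinite.
-/

open Matrix

/-- The discrete (mass-lumped) energy `E_h(ψ,p) = ½ψᵀKψ + Σᵢ mᵢ(½ − (2β/3)pᵢ)pᵢ²`. -/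
noncomputable def Eh {N : ℕ} (m : Fin N → ℝ) (K : Matrix (Fin N) (Fin N) ℝ) (β : ℝ)
    (ψ p : Fin N → ℝ) : ℝ :=
  (1 / 2) * (ψ ⬝ᵥ K.mulVec ψ) + ∑ i, m i * ((1 / 2 - (2 * β / 3) * p i) * (p i) ^ 2)

namespace Matrix

variable {n R : Type*} [Fintype n] [CommRing R] {K : Matrix n n R}

theorem IsSymm.dotProduct_mulVec_comm (hK : K.IsSymm) (v w : n → R) :
    v ⬝ᵥ K *ᵥ w = w ⬝ᵥ K *ᵥ v := by
  rw [dotProduct_mulVec, ← mulVec_transpose, hK.eq, dotProduct_comm]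

theorem IsSymm.sub_dotProduct_mulVec_add (hK : K.IsSymm) (x y : n → R) :
    (y - x) ⬝ᵥ K *ᵥ (x + y) = y ⬝ᵥ K *ᵥ y - x ⬝ᵥ K *ᵥ x := by
  rw [mulVec_add, sub_dotProduct, dotProduct_add, dotProduct_add, hK.dotProduct_mulVec_comm y x]
  ring

end Matrix

noncomputable def westerveltDensity (β p : ℝ) : ℝ :=
  (1 / 2 - (2 * β / 3) * p) * p ^ 2

theorem westerveltDensity_sub (β a b : ℝ) :
    westerveltDensity β b - westerveltDensity β a
      = (b - a) * ((1 - 2 * β * ((a + b) / 2)) * ((a + b) / 2) - (β / 6) * (b - a) ^ 2) := by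
  unfold westerveltDensity
  ring

theorem Eh_eq {N : ℕ} (m : Fin N → ℝ) (K : Matrix (Fin N) (Fin N) ℝ) (β : ℝ) (ψ p : Fin N → ℝ) :
    Eh m K β ψ p = (1 / 2) * (ψ ⬝ᵥ K *ᵥ ψ) + ∑ i, m i * westerveltDensity β (p i) :=
  rfl

theorem Eh_sub_eq_of_scheme {N : ℕ} {m : Fin N → ℝ} {K : Matrix (Fin N) (Fin N) ℝ}
    (hK : K.IsSymm) {α β τ : ℝ} {ψn ψn1 pn pn1 : Fin N → ℝ}
    (h1 : ∀ i, m i * (1 - 2 * β * ((pn i + pn1 i) / 2)) * (pn1 i - pn i) / τ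
        + α * (K.mulVec (ψn1 - ψn)) i / τ
        + (K.mulVec (fun j => (ψn j + ψn1 j) / 2)) i = 0)
    (h2 : ∀ i, (1 - 2 * β * ((pn i + pn1 i) / 2)) * (ψn1 i - ψn i) / τ
        = (1 - 2 * β * ((pn i + pn1 i) / 2)) * ((pn i + pn1 i) / 2)
          - (β / 6) * (pn1 i - pn i) ^ 2) :
    Eh m K β ψn1 pn1 - Eh m K β ψn pn
      = -(α / τ) * ((ψn1 - ψn) ⬝ᵥ K *ᵥ (ψn1 - ψn)) := by
  set ψb : Fin N → ℝ := fun j => (ψn j + ψn1 j) / 2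
  set F : Fin N → ℝ := fun i => α * (K *ᵥ (ψn1 - ψn)) i / τ + (K *ᵥ ψb) i
  have hmid : ψb = (2⁻¹ : ℝ) • (ψn + ψn1) := by
    ext j
    simp only [ψb, Pi.smul_apply, Pi.add_apply, smul_eq_mul]
    ring
  have hF : F = (α / τ) • (K *ᵥ (ψn1 - ψn)) + K *ᵥ ψb := by
    ext i
    simp only [F, Pi.add_apply, Pi.smul_apply, smul_eq_mul]
    ring
  have hquad : (1 / 2) * (ψn1 ⬝ᵥ K *ᵥ ψn1) - (1 / 2) * (ψn ⬝ᵥ K *ᵥ ψn)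
      = (ψn1 - ψn) ⬝ᵥ K *ᵥ ψb := by
    rw [hmid, mulVec_smul, dotProduct_smul, hK.sub_dotProduct_mulVec_add, smul_eq_mul]
    ring
  have hnode : ∀ i, m i * (westerveltDensity β (pn1 i) - westerveltDensity β (pn i))
      = -((ψn1 - ψn) i * F i) := fun i => by
    rw [westerveltDensity_sub]
    simp only [F, Pi.sub_apply]
    linear_combination (-(m i * (pn1 i - pn i))) * h2 i + (ψn1 i - ψn i) * h1 i
  calc
    Eh m K β ψn1 pn1 - Eh m K β ψn pn
      = ((1 / 2) * (ψn1 ⬝ᵥ K *ᵥ ψn1) - (1 / 2) * (ψn ⬝ᵥ K *ᵥ ψn))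
        + ∑ i, m i * (westerveltDensity β (pn1 i) - westerveltDensity β (pn i)) := by
      simp only [Eh_eq, mul_sub, Finset.sum_sub_distrib]
      ring
    _ = (ψn1 - ψn) ⬝ᵥ K *ᵥ ψb - (ψn1 - ψn) ⬝ᵥ F := by
      rw [hquad, Finset.sum_congr rfl fun i _ => hnode i, Finset.sum_neg_distrib, sub_eq_add_neg]
      rfl
    _ = -(α / τ) * ((ψn1 - ψn) ⬝ᵥ K *ᵥ (ψn1 - ψn)) := by
      rw [hF, dotProduct_add, dotProduct_smul, smul_eq_mul]
      ring

/-- Discrete passivity of the one-step mass-lumped structure-preserving scheme for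
the Westervelt equation: with `K` symmetric positive semidefinite and `α ≥ 0`, the
discrete energy is nonincreasing from one time step to the next. -/
theorem one_step_scheme_passivity (N : ℕ) (m : Fin N → ℝ)
    (K : Matrix (Fin N) (Fin N) ℝ) (hK : K.PosSemidef) (α β τ : ℝ)
    (hα : 0 ≤ α) (hτ : 0 < τ) (ψn ψn1 pn pn1 : Fin N → ℝ)
    (h1 : ∀ i, m i * (1 - 2 * β * ((pn i + pn1 i) / 2)) * (pn1 i - pn i) / τ
        + α * (K.mulVec (ψn1 - ψn)) i / τ
        + (K.mulVec (fun j => (ψn j + ψn1 j) / 2)) i = 0)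
    (h2 : ∀ i, (1 - 2 * β * ((pn i + pn1 i) / 2)) * (ψn1 i - ψn i) / τ
        = (1 - 2 * β * ((pn i + pn1 i) / 2)) * ((pn i + pn1 i) / 2)
          - (β / 6) * (pn1 i - pn i) ^ 2) :
    Eh m K β ψn1 pn1 ≤ Eh m K β ψn pn := by
  have hsymm : K.IsSymm := isHermitian_iff_isSymm.mp hK.isHermitian
  have hdiss : 0 ≤ α / τ * ((ψn1 - ψn) ⬝ᵥ K *ᵥ (ψn1 - ψn)) :=
    mul_nonneg (div_nonneg hα hτ.le) (by simpa using hK.dotProduct_mulVec_nonneg (ψn1 - ψn))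
  linarith [Eh_sub_eq_of_scheme hsymm h1 h2]
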